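/- arXiv:2405.19759 — 4 statements merged into one kernel-verified Lean document; each statement's English description precedes it below -/
import Mathlib

section
/- Newton–Kantorovich / radii polynomial theorem: Let $F: X\to X'$ be a Fréchet differentiable map between Banach spaces, let $A\in B(X',X)$ be injective, $\bar a\in X$, and $r^*\in(0,\infty]$. Suppose $Y,Z,W\ge 0$ satisfy $\|AF(\bar a)\|_X\le Y$, $\|I-ADF(\bar a)\|_{B(X)}\le Z$, and $\|A[DF(\bar a+w)-DF(\bar a)]\|_{B(X)}\le W\|w\|_X$ for all $\|w\|_X\le r^*$. If $Z<1$ and $2YW<(1-Z)^2$, then for any $r$ with $\frac{1-Z-\sqrt{(1-Z)^2-2YW}}{W}\le r<\min\left(\frac{1-Z}{W},r^*\right)$, there exists a unique $\hat a\in X$ with $F(\hat a)=0$ and $\|\hat a-\bar a\|_X\le r$. -/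
set_option maxHeartbeats 800000 in
theorem stmt8 {X X' : Type*} [NormedAddCommGroup X] [NormedSpace ℝ X] [CompleteSpace X]
    [NormedAddCommGroup X'] [NormedSpace ℝ X']
    (F : X → X') (DF : X → X →L[ℝ] X') (hF : ∀ a : X, HasFDerivAt F (DF a) a)
    (A : X' →L[ℝ] X) (hA : Function.Injective A) (abar : X)
    (rstar : ENNReal) (hrstar : 0 < rstar)
    (Y Z W : ℝ) (hY0 : 0 ≤ Y) (hZ0 : 0 ≤ Z) (hW0 : 0 ≤ W)
    (hY : ‖A (F abar)‖ ≤ Y)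
    (hZ : ‖ContinuousLinearMap.id ℝ X - A.comp (DF abar)‖ ≤ Z)
    (hW : ∀ w : X, (‖w‖₊ : ENNReal) ≤ rstar →
      ‖A.comp (DF (abar + w)) - A.comp (DF abar)‖ ≤ W * ‖w‖)
    (hZ1 : Z < 1) (hYW : 2 * Y * W < (1 - Z) ^ 2)
    (r : ℝ) (hr1 : (1 - Z - Real.sqrt ((1 - Z) ^ 2 - 2 * Y * W)) / W ≤ r)
    (hr2 : r < (1 - Z) / W) (hr3 : ENNReal.ofReal r < rstar) :
    ∃! a : X, F a = 0 ∧ ‖a - abar‖ ≤ r := by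
  -- D ≥ 0
  have hD0 : (0:ℝ) ≤ (1 - Z) ^ 2 - 2 * Y * W := le_of_lt (by linarith)
  have hsqrt_le : Real.sqrt ((1 - Z) ^ 2 - 2 * Y * W) ≤ 1 - Z := by
    calc Real.sqrt ((1 - Z) ^ 2 - 2 * Y * W) ≤ Real.sqrt ((1 - Z) ^ 2) :=
          Real.sqrt_le_sqrt (by nlinarith)
      _ = 1 - Z := by rw [Real.sqrt_sq (by linarith)]
  -- W > 0
  have hWpos : 0 < W := by
    rcases lt_or_eq_of_le hW0 with h | h
    · exact h
    · exfalso
      rw [← h] at hr1 hr2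
      simp only [div_zero] at hr1 hr2
      exact absurd hr2 (not_lt.mpr hr1)
  have hr0 : 0 ≤ r := le_trans (div_nonneg (by linarith) hW0) hr1
  -- key inequality : Y ≤ (1-Z)*r - (W/2)*r^2
  have hsqrt_ge : 1 - Z - W * r ≤ Real.sqrt ((1 - Z) ^ 2 - 2 * Y * W) := by
    have := (div_le_iff₀ hWpos).mp hr1
    linarith [this]
  have hWr : W * r < 1 - Z := by
    have := (lt_div_iff₀ hWpos).mp hr2
    linarith
  have hkey : Y ≤ (1 - Z) * r - W / 2 * r ^ 2 := by
    rcases le_or_gt (1 - Z - W * r) 0 with h | h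
    · nlinarith
    · have hsq : (1 - Z - W * r) ^ 2 ≤ (1 - Z) ^ 2 - 2 * Y * W := by
        have := pow_le_pow_left₀ (le_of_lt h) hsqrt_ge 2
        rwa [Real.sq_sqrt hD0] at this
      nlinarith
  -- the Newton map
  set T : X → X := fun a => a - A (F a) with hT
  have hDT : ∀ a : X, HasFDerivAt T
      (ContinuousLinearMap.id ℝ X - A.comp (DF a)) a := by
    intro a
    exact (hasFDerivAt_id a).sub (A.hasFDerivAt.comp a (hF a))
  -- bound on the derivative
  have hDTbound : ∀ w : X, ‖w‖ ≤ r →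
      ‖ContinuousLinearMap.id ℝ X - A.comp (DF (abar + w))‖ ≤ Z + W * ‖w‖ := by
    intro w hw
    have hwr : (‖w‖₊ : ENNReal) ≤ rstar := by
      rw [← enorm_eq_nnnorm, ← ofReal_norm]
      exact le_trans (ENNReal.ofReal_le_ofReal hw) (le_of_lt hr3)
    have h1 := hW w hwr
    have heq : ContinuousLinearMap.id ℝ X - A.comp (DF (abar + w)) =
        (ContinuousLinearMap.id ℝ X - A.comp (DF abar)) -
          (A.comp (DF (abar + w)) - A.comp (DF abar)) := by abel
    calc ‖ContinuousLinearMap.id ℝ X - A.comp (DF (abar + w))‖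
        = ‖(ContinuousLinearMap.id ℝ X - A.comp (DF abar)) -
            (A.comp (DF (abar + w)) - A.comp (DF abar))‖ := by rw [heq]
      _ ≤ ‖ContinuousLinearMap.id ℝ X - A.comp (DF abar)‖ +
            ‖A.comp (DF (abar + w)) - A.comp (DF abar)‖ := norm_sub_le _ _
      _ ≤ Z + W * ‖w‖ := add_le_add hZ h1
  -- quadratic mean value estimate from abar
  have hTabar : ‖T abar - abar‖ ≤ Y := by
    simp only [hT]
    simpa using hY
  have hmv : ∀ a : X, ‖a - abar‖ ≤ r →
      ‖T a - T abar‖ ≤ Z * ‖a - abar‖ + W / 2 * ‖a - abar‖ ^ 2 := by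
    intro a ha
    set w := a - abar with hwdef
    set g : ℝ → X := fun t => T (abar + t • w) - T abar with hg
    have hg' : ∀ t : ℝ, HasDerivAt g
        ((ContinuousLinearMap.id ℝ X - A.comp (DF (abar + t • w))) w) t := by
      intro t
      have h1 : HasDerivAt (fun t : ℝ => abar + t • w) w t := by
        simpa using ((hasDerivAt_id t).smul_const w).const_add abar
      exact ((hDT (abar + t • w)).comp_hasDerivAt t h1).sub_const _
    have hBderiv : ∀ t : ℝ, HasDerivAt
        (fun t => Z * ‖w‖ * t + W / 2 * ‖w‖ ^ 2 * t ^ 2)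
        (Z * ‖w‖ + W * ‖w‖ ^ 2 * t) t := by
      intro t
      have h1 : HasDerivAt (fun t : ℝ => Z * ‖w‖ * t) (Z * ‖w‖) t := by
        simpa using (hasDerivAt_id t).const_mul (Z * ‖w‖)
      have h2 : HasDerivAt (fun t : ℝ => W / 2 * ‖w‖ ^ 2 * t ^ 2)
          (W / 2 * ‖w‖ ^ 2 * (2 * t)) t := by
        simpa using ((hasDerivAt_pow 2 t)).const_mul (W / 2 * ‖w‖ ^ 2)
      have := h1.add h2
      exact this.congr_deriv (by ring)
    have hbound : ∀ t ∈ Set.Ico (0:ℝ) 1,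
        ‖(ContinuousLinearMap.id ℝ X - A.comp (DF (abar + t • w))) w‖ ≤
          Z * ‖w‖ + W * ‖w‖ ^ 2 * t := by
      intro t ht
      have htw : ‖t • w‖ ≤ r := by
        rw [norm_smul, Real.norm_eq_abs, abs_of_nonneg ht.1]
        calc t * ‖w‖ ≤ 1 * ‖w‖ :=
              mul_le_mul_of_nonneg_right (le_of_lt ht.2) (norm_nonneg w)
          _ = ‖w‖ := one_mul _
          _ ≤ r := ha
      calc ‖(ContinuousLinearMap.id ℝ X - A.comp (DF (abar + t • w))) w‖
          ≤ ‖ContinuousLinearMap.id ℝ X - A.comp (DF (abar + t • w))‖ * ‖w‖ :=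
            ContinuousLinearMap.le_opNorm _ _
        _ ≤ (Z + W * ‖t • w‖) * ‖w‖ :=
            mul_le_mul_of_nonneg_right (hDTbound _ htw) (norm_nonneg w)
        _ = Z * ‖w‖ + W * ‖t • w‖ * ‖w‖ := by ring
        _ ≤ Z * ‖w‖ + W * ‖w‖ ^ 2 * t := by
            rw [norm_smul, Real.norm_eq_abs, abs_of_nonneg ht.1]
            nlinarith [norm_nonneg w]
    have := image_norm_le_of_norm_deriv_right_le_deriv_boundary
      (f := g) (a := (0:ℝ)) (b := 1)
      (fun t _ => (hg' t).continuousAt.continuousWithinAt)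
      (fun t _ => (hg' t).hasDerivWithinAt.mono (Set.Ici_subset_Ici.mpr le_rfl))
      (by simp [hg]) hBderiv hbound (Set.right_mem_Icc.mpr zero_le_one)
    have hg1 : g 1 = T a - T abar := by simp [hg, hwdef]
    rw [hg1] at this
    linarith [this]
  -- T maps the closed ball into itself
  have hmaps : Set.MapsTo T (Metric.closedBall abar r) (Metric.closedBall abar r) := by
    intro a ha
    rw [Metric.mem_closedBall, dist_eq_norm] at ha ⊢
    have h1 := hmv a ha
    have h2 : Z * ‖a - abar‖ + W / 2 * ‖a - abar‖ ^ 2 ≤ Z * r + W / 2 * r ^ 2 := by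
      have h3 : ‖a - abar‖ ^ 2 ≤ r ^ 2 := by nlinarith [norm_nonneg (a - abar)]
      nlinarith [norm_nonneg (a - abar), mul_le_mul_of_nonneg_left ha hZ0]
    calc ‖T a - abar‖ ≤ ‖T a - T abar‖ + ‖T abar - abar‖ := by
          simpa using norm_sub_le_norm_sub_add_norm_sub (T a) (T abar) abar
      _ ≤ Z * r + W / 2 * r ^ 2 + Y := by linarith
      _ ≤ r := by nlinarith
  -- contraction constant
  set κ : ℝ := Z + W * r with hκdef
  have hκ0 : 0 ≤ κ := by positivity
  have hκ1 : κ < 1 := by simp only [hκdef]; linarith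
  have hLip : ∀ a ∈ Metric.closedBall abar r, ∀ b ∈ Metric.closedBall abar r,
      ‖T a - T b‖ ≤ κ * ‖a - b‖ := by
    intro a ha b hb
    refine Convex.norm_image_sub_le_of_norm_hasFDerivWithin_le
      (fun x _ => (hDT x).hasFDerivWithinAt) (fun x hx => ?_)
      (convex_closedBall abar r) hb ha
    rw [Metric.mem_closedBall, dist_eq_norm] at hx
    have := hDTbound (x - abar) hx
    rw [add_sub_cancel] at this
    calc ‖ContinuousLinearMap.id ℝ X - A.comp (DF x)‖ ≤ Z + W * ‖x - abar‖ := this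
      _ ≤ κ := by simp only [hκdef]; nlinarith
  -- set up the contraction on the subtype
  set s : Set X := Metric.closedBall abar r with hs
  haveI : CompleteSpace s := IsClosed.completeSpace_coe (hs := Metric.isClosed_closedBall)
  haveI : Nonempty s := ⟨⟨abar, Metric.mem_closedBall_self hr0⟩⟩
  set T' : s → s := fun x => ⟨T x.1, hmaps x.2⟩ with hT'
  have hcontr : ContractingWith ⟨κ, hκ0⟩ T' := by
    constructor
    · exact_mod_cast hκ1
    · apply LipschitzWith.of_dist_le_mul
      intro x y
      have : dist (T' x) (T' y) = ‖T x.1 - T y.1‖ := by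
        simp [hT', Subtype.dist_eq, dist_eq_norm]
      rw [this]
      have hd : dist x y = ‖x.1 - y.1‖ := by simp [Subtype.dist_eq, dist_eq_norm]
      rw [hd]
      exact_mod_cast hLip x.1 x.2 y.1 y.2
  -- fixed points correspond to zeros of F in the ball
  have hfix_iff : ∀ a : X, T a = a ↔ F a = 0 := by
    intro a
    constructor
    · intro h
      have : A (F a) = 0 := by
        have : a - A (F a) = a := h
        have := sub_eq_self.mp this
        exact this
      have : A (F a) = A 0 := by rw [this, map_zero]
      exact hA this
    · intro h
      simp [hT, h]
  obtain ⟨y, hy⟩ := hcontr.exists_fixedPoint (Classical.arbitrary s) (edist_ne_top _ _)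
  refine ⟨y.1, ⟨?_, ?_⟩, ?_⟩
  · exact (hfix_iff y.1).mp (congrArg Subtype.val hy.1)
  · have h := y.2
    simp only [hs, Metric.mem_closedBall, dist_eq_norm] at h
    exact h
  · intro b hb
    have hbs : b ∈ s := by
      rw [hs, Metric.mem_closedBall, dist_eq_norm]
      exact hb.2
    have hfb : T' ⟨b, hbs⟩ = ⟨b, hbs⟩ := by
      apply Subtype.ext
      exact (hfix_iff b).mpr hb.1
    have := hcontr.eq_or_edist_eq_top_of_fixedPoints hfb hy.1
    rcases this with h | h
    · exact congrArg Subtype.val h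
    · exact absurd h (edist_ne_top _ _)
end

section
/- Under the hypotheses of the radii polynomial theorem with $Z<1$ and $2YW<(1-Z)^2$, the operator $T(a):=a-AF(a)$ satisfies: for all $a$ in the closed ball $\bar B_r(\bar a)$ with $r$ as in the theorem, $\|T(a)-\bar a\|_X\le r$ and $T$ is Lipschitz on $\bar B_r(\bar a)$ with constant $Z+Wr<1$. -/
theorem stmt9 {X X' : Type*} [NormedAddCommGroup X] [NormedSpace ℝ X] [CompleteSpace X]
    [NormedAddCommGroup X'] [NormedSpace ℝ X']
    (F : X → X') (DF : X → X →L[ℝ] X') (hF : ∀ a : X, HasFDerivAt F (DF a) a)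
    (A : X' →L[ℝ] X) (abar : X)
    (rstar : ENNReal) (hrstar : 0 < rstar)
    (Y Z W : ℝ) (hY0 : 0 ≤ Y) (hZ0 : 0 ≤ Z) (hW0 : 0 ≤ W)
    (hY : ‖A (F abar)‖ ≤ Y)
    (hZ : ‖ContinuousLinearMap.id ℝ X - A.comp (DF abar)‖ ≤ Z)
    (hW : ∀ w : X, (‖w‖₊ : ENNReal) ≤ rstar →
      ‖A.comp (DF (abar + w)) - A.comp (DF abar)‖ ≤ W * ‖w‖)
    (hZ1 : Z < 1) (hYW : 2 * Y * W < (1 - Z) ^ 2)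
    (r : ℝ) (hr1 : (1 - Z - Real.sqrt ((1 - Z) ^ 2 - 2 * Y * W)) / W ≤ r)
    (hr2 : r < (1 - Z) / W) (hr3 : ENNReal.ofReal r < rstar) :
    Z + W * r < 1 ∧
    (∀ a : X, ‖a - abar‖ ≤ r → ‖(a - A (F a)) - abar‖ ≤ r) ∧
    (∀ a a' : X, ‖a - abar‖ ≤ r → ‖a' - abar‖ ≤ r →
      ‖(a - A (F a)) - (a' - A (F a'))‖ ≤ (Z + W * r) * ‖a - a'‖) := by
  -- W must be positive
  rcases eq_or_lt_of_le hW0 with hWeq | hWpos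
  · exfalso
    rw [← hWeq, div_zero] at hr1 hr2
    linarith
  -- basic facts about the square root
  set D : ℝ := (1 - Z) ^ 2 - 2 * Y * W with hD
  have hDpos : 0 < D := by simp only [hD]; linarith
  have hs0 : 0 ≤ Real.sqrt D := Real.sqrt_nonneg _
  have hs2 : Real.sqrt D ^ 2 = D := Real.sq_sqrt hDpos.le
  have hsle : Real.sqrt D ≤ 1 - Z := by
    have h1 : Real.sqrt D ≤ Real.sqrt ((1 - Z) ^ 2) := Real.sqrt_le_sqrt (by nlinarith)
    have h2 : Real.sqrt ((1 - Z) ^ 2) = 1 - Z := by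
      rw [Real.sqrt_sq (by linarith)]
    linarith
  have hr0 : 0 ≤ r := le_trans (div_nonneg (by linarith) hWpos.le) hr1
  have hr1' : 1 - Z - Real.sqrt D ≤ W * r := by
    rw [div_le_iff₀ hWpos] at hr1; linarith [hr1]
  have hr2' : W * r < 1 - Z := by
    rw [lt_div_iff₀ hWpos] at hr2; linarith [hr2]
  -- the key quadratic inequality
  have hquad : Y + Z * r + W / 2 * r ^ 2 ≤ r := by nlinarith [hs0, hs2, hr1', hr2']
  -- derivative of T
  have hT : ∀ x : X, HasFDerivAt (fun x : X => x - A (F x))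
      (ContinuousLinearMap.id ℝ X - A.comp (DF x)) x := fun x =>
    (hasFDerivAt_id x).sub (A.hasFDerivAt.comp x (hF x))
  -- key operator norm bound
  have key : ∀ w : X, ‖w‖ ≤ r →
      ‖ContinuousLinearMap.id ℝ X - A.comp (DF (abar + w))‖ ≤ Z + W * ‖w‖ := by
    intro w hw
    have hmem : (‖w‖₊ : ENNReal) ≤ rstar := by
      rw [← ENNReal.ofReal_coe_nnreal, coe_nnnorm]
      exact le_of_lt (lt_of_le_of_lt (ENNReal.ofReal_le_ofReal hw) hr3)
    have h1 := hW w hmem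
    have heq : ContinuousLinearMap.id ℝ X - A.comp (DF (abar + w)) =
        (ContinuousLinearMap.id ℝ X - A.comp (DF abar)) -
        (A.comp (DF (abar + w)) - A.comp (DF abar)) := by abel
    rw [heq]
    calc ‖(ContinuousLinearMap.id ℝ X - A.comp (DF abar)) -
        (A.comp (DF (abar + w)) - A.comp (DF abar))‖
        ≤ ‖ContinuousLinearMap.id ℝ X - A.comp (DF abar)‖ +
          ‖A.comp (DF (abar + w)) - A.comp (DF abar)‖ := norm_sub_le _ _
      _ ≤ Z + W * ‖w‖ := add_le_add hZ h1
  refine ⟨by linarith, ?_, ?_⟩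
  · -- contraction into ball
    intro a ha
    set v : X := a - abar with hv
    have hveq : abar + v = a := by simp [hv]
    set f : ℝ → X := fun t => (abar + t • v - A (F (abar + t • v))) - (abar - A (F abar))
      with hf_def
    set f' : ℝ → X := fun t =>
      (ContinuousLinearMap.id ℝ X - A.comp (DF (abar + t • v))) v with hf'_def
    have hderiv : ∀ t : ℝ, HasDerivAt f (f' t) t := by
      intro t
      have hc : HasDerivAt (fun t : ℝ => abar + t • v) v t := by
        simpa using ((hasDerivAt_id t).smul_const v).const_add abar
      have h2 := (hT (abar + t • v)).comp_hasDerivAt t hc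
      exact h2.sub_const _
    have hfc : ContinuousOn f (Set.Icc 0 1) :=
      (fun t _ => ((hderiv t).continuousAt.continuousWithinAt))
    set B : ℝ → ℝ := fun t => Z * ‖v‖ * t + W / 2 * ‖v‖ ^ 2 * t ^ 2 with hB_def
    set B' : ℝ → ℝ := fun t => Z * ‖v‖ + W * ‖v‖ ^ 2 * t with hB'_def
    have hB : ∀ t : ℝ, HasDerivAt B (B' t) t := by
      intro t
      have h1 : HasDerivAt (fun t : ℝ => Z * ‖v‖ * t) (Z * ‖v‖) t := by
        simpa using (hasDerivAt_id t).const_mul (Z * ‖v‖)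
      have h2 : HasDerivAt (fun t : ℝ => W / 2 * ‖v‖ ^ 2 * t ^ 2)
          (W / 2 * ‖v‖ ^ 2 * (2 * t)) t := by
        simpa using (hasDerivAt_pow 2 t).const_mul (W / 2 * ‖v‖ ^ 2)
      have := h1.add h2
      have e : B' t = Z * ‖v‖ + W / 2 * ‖v‖ ^ 2 * (2 * t) := by simp only [hB'_def]; ring
      rw [e]; exact this
    have bound : ∀ t ∈ Set.Ico (0 : ℝ) 1, ‖f' t‖ ≤ B' t := by
      intro t ht
      have ht0 : 0 ≤ t := ht.1
      have ht1 : t ≤ 1 := ht.2.le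
      have hnv : ‖t • v‖ = t * ‖v‖ := by
        rw [norm_smul, Real.norm_eq_abs, abs_of_nonneg ht0]
      have hvr : ‖v‖ ≤ r := ha
      have htv : ‖t • v‖ ≤ r := by
        rw [hnv]
        nlinarith [norm_nonneg v]
      have hk := key (t • v) htv
      calc ‖f' t‖ ≤ ‖ContinuousLinearMap.id ℝ X - A.comp (DF (abar + t • v))‖ * ‖v‖ :=
            (ContinuousLinearMap.id ℝ X - A.comp (DF (abar + t • v))).le_opNorm v
        _ ≤ (Z + W * ‖t • v‖) * ‖v‖ := by
            apply mul_le_mul_of_nonneg_right hk (norm_nonneg v)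
        _ = B' t := by rw [hnv]; simp only [hB'_def]; ring
    have ha0 : ‖f 0‖ ≤ B 0 := by
      simp [hf_def, hB_def]
    have hres := image_norm_le_of_norm_deriv_right_le_deriv_boundary hfc
      (fun t _ => (hderiv t).hasDerivWithinAt) ha0 hB bound
      (Set.right_mem_Icc.2 zero_le_one)
    have hf1 : f 1 = (a - A (F a)) - (abar - A (F abar)) := by
      simp [hf_def, hveq]
    have hB1 : B 1 = Z * ‖v‖ + W / 2 * ‖v‖ ^ 2 := by simp [hB_def]
    rw [hf1, hB1] at hres
    have hfinal : (a - A (F a)) - abar = ((a - A (F a)) - (abar - A (F abar))) - A (F abar) := by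
      abel
    rw [hfinal]
    calc ‖((a - A (F a)) - (abar - A (F abar))) - A (F abar)‖
        ≤ ‖(a - A (F a)) - (abar - A (F abar))‖ + ‖A (F abar)‖ := norm_sub_le _ _
      _ ≤ (Z * ‖v‖ + W / 2 * ‖v‖ ^ 2) + Y := add_le_add hres hY
      _ ≤ r := by
          have h1 : Z * ‖v‖ ≤ Z * r := mul_le_mul_of_nonneg_left ha hZ0
          have h2 : ‖v‖ ^ 2 ≤ r ^ 2 := pow_le_pow_left₀ (norm_nonneg v) ha 2
          have h3 : W / 2 * ‖v‖ ^ 2 ≤ W / 2 * r ^ 2 :=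
            mul_le_mul_of_nonneg_left h2 (by linarith)
          linarith
  · -- Lipschitz estimate
    intro a a' ha ha'
    have hconv : Convex ℝ (Metric.closedBall abar r) := convex_closedBall abar r
    have hmem : ∀ b : X, ‖b - abar‖ ≤ r → b ∈ Metric.closedBall abar r := by
      intro b hb
      rw [Metric.mem_closedBall, dist_eq_norm]
      exact hb
    have hbound : ∀ x ∈ Metric.closedBall abar r,
        ‖ContinuousLinearMap.id ℝ X - A.comp (DF x)‖ ≤ Z + W * r := by
      intro x hx
      rw [Metric.mem_closedBall, dist_eq_norm] at hx
      have hk := key (x - abar) hx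
      rw [add_sub_cancel] at hk
      have : W * ‖x - abar‖ ≤ W * r := mul_le_mul_of_nonneg_left hx hWpos.le
      linarith
    exact hconv.norm_image_sub_le_of_norm_hasFDerivWithin_le
      (fun x _ => (hT x).hasFDerivWithinAt) hbound (hmem a' ha') (hmem a ha)
end

section
/- Aliasing error bound: Under the setting of the discrete Poisson summation formula, suppose additionally that $|\bar b_j|\le \widehat C\,\bar\nu_1^{-|j_1|}\bar\nu_2^{-|j_2|}$ for all $j\in\mathbb{Z}^2$, for some $\widehat C\ge 0$ and $\bar\nu_1,\bar\nu_2>1$. Then for all $n$ with $-M_j\le n_j\le M_j-1$ ($j=1,2$): $|\bar b_n - \bar b^{FFT}_n| \le \widehat C\,\bar\nu_1^{|n_1|}\bar\nu_2^{|n_2|}\cdot\frac{2(\bar\nu_1^{-2M_1}+\bar\nu_2^{-2M_2})}{(1-\bar\nu_1^{-2M_1})(1-\bar\nu_2^{-2M_2})}$. -/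
open Complex

lemma orth1 (M : ℕ) (hM : 0 < M) (m : ℤ) :
    ∑ k ∈ Finset.Icc (-(M : ℤ)) ((M : ℤ) - 1),
      Complex.exp (Complex.I * (m : ℂ) * ((Real.pi * (k : ℝ) / (M : ℝ) : ℝ) : ℂ)) =
      if (2 * (M : ℤ)) ∣ m then ((2 * M : ℕ) : ℂ) else 0 := by
  have hM0 : (M : ℂ) ≠ 0 := by exact_mod_cast hM.ne'
  set z : ℂ := Complex.I * m * Real.pi / M with hz
  have hterm : ∀ k : ℤ, Complex.exp (Complex.I * (m : ℂ) * ((Real.pi * (k : ℝ) / (M : ℝ) : ℝ) : ℂ))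
      = Complex.exp z ^ k := by
    intro k
    rw [← Complex.exp_int_mul]
    congr 1
    push_cast
    rw [hz]
    field_simp
  simp only [hterm]
  have hmap : Finset.Icc (-(M : ℤ)) ((M : ℤ) - 1)
      = Finset.map ⟨fun i : ℕ => -(M : ℤ) + i, (show Function.Injective (fun i : ℕ => -(M : ℤ) + i) from by intro a b h; exact_mod_cast add_left_cancel h)⟩ (Finset.range (2 * M)) := by
    ext x
    simp only [Finset.mem_Icc, Finset.mem_map, Finset.mem_range, Function.Embedding.coeFn_mk]
    constructor
    · intro h; exact ⟨(x + M).toNat, by omega, by omega⟩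
    · rintro ⟨a, ha, rfl⟩; omega
  rw [hmap, Finset.sum_map]
  simp only [Function.Embedding.coeFn_mk]
  have hne : Complex.exp z ≠ 0 := Complex.exp_ne_zero z
  by_cases hdvd : (2 * (M : ℤ)) ∣ m
  · obtain ⟨t, rfl⟩ := hdvd
    have hz1 : Complex.exp z = 1 := by
      have : z = (t : ℂ) * (2 * Real.pi * Complex.I) := by
        rw [hz]; push_cast; field_simp
      rw [this, Complex.exp_int_mul, Complex.exp_two_pi_mul_I, one_zpow]
    simp [hz1]
  · have hw1 : Complex.exp z ≠ 1 := by
      intro h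
      rw [Complex.exp_eq_one_iff] at h
      obtain ⟨t, ht⟩ := h
      apply hdvd
      refine ⟨t, ?_⟩
      have hπ : (Real.pi : ℂ) ≠ 0 := by
        exact_mod_cast Real.pi_ne_zero
      have hIπ : Complex.I * (Real.pi : ℂ) ≠ 0 := mul_ne_zero Complex.I_ne_zero hπ
      have h3 : (Complex.I * (Real.pi : ℂ)) * (m : ℂ)
          = (Complex.I * (Real.pi : ℂ)) * ((2 * (M : ℤ) * t : ℤ) : ℂ) := by
        rw [hz] at ht
        field_simp at ht
        push_cast
        linear_combination (Complex.I * (Real.pi : ℂ)) * ht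
      have h4 := mul_left_cancel₀ hIπ h3
      exact_mod_cast h4
    have hpow : Complex.exp z ^ (2 * M) = 1 := by
      rw [← Complex.exp_nat_mul]
      have : (2 * M : ℕ) * z = (m : ℂ) * (2 * Real.pi * Complex.I) := by
        rw [hz]; push_cast; field_simp
      rw [this, Complex.exp_int_mul, Complex.exp_two_pi_mul_I, one_zpow]
    have hgeom : ∑ i ∈ Finset.range (2 * M), Complex.exp z ^ i = 0 := by
      rw [geom_sum_eq hw1, hpow, sub_self, zero_div]
    calc ∑ i ∈ Finset.range (2 * M), Complex.exp z ^ (-(M : ℤ) + (i : ℤ))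
        = ∑ i ∈ Finset.range (2 * M), Complex.exp z ^ (-(M : ℤ)) * Complex.exp z ^ (i : ℕ) := by
          refine Finset.sum_congr rfl fun i _ => ?_
          rw [zpow_add₀ hne, zpow_natCast]
      _ = Complex.exp z ^ (-(M : ℤ)) * ∑ i ∈ Finset.range (2 * M), Complex.exp z ^ i := by
          rw [Finset.mul_sum]
      _ = 0 := by rw [hgeom, mul_zero]
      _ = _ := by simp [hdvd]

lemma geoZ_summable {ξ : ℝ} (h0 : 0 ≤ ξ) (h1 : ξ < 1) :
    Summable fun l : ℤ => ξ ^ l.natAbs := by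
  apply Summable.of_nat_of_neg_add_one
  · simpa using summable_geometric_of_lt_one h0 h1
  · have : Summable fun n : ℕ => ξ ^ n * ξ :=
      (summable_geometric_of_lt_one h0 h1).mul_right ξ
    apply this.congr
    intro n
    have : ((-(↑n + 1) : ℤ)).natAbs = n + 1 := by omega
    rw [this, pow_succ]

lemma geoZ_tsum {ξ : ℝ} (h0 : 0 ≤ ξ) (h1 : ξ < 1) :
    ∑' l : ℤ, ξ ^ l.natAbs = (1 + ξ) / (1 - ξ) := by
  rw [tsum_of_nat_of_neg_add_one]
  · have e1 : ∑' n : ℕ, ξ ^ ((n : ℤ)).natAbs = (1 - ξ)⁻¹ := by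
      simpa using tsum_geometric_of_lt_one h0 h1
    have e2 : ∑' n : ℕ, ξ ^ ((-(↑n + 1) : ℤ)).natAbs = ξ * (1 - ξ)⁻¹ := by
      have he : ∀ n : ℕ, ξ ^ ((-(↑n + 1) : ℤ)).natAbs = ξ ^ n * ξ := by
        intro n
        have : ((-(↑n + 1) : ℤ)).natAbs = n + 1 := by omega
        rw [this, pow_succ]
      rw [tsum_congr he, tsum_mul_right, tsum_geometric_of_lt_one h0 h1, mul_comm]
    rw [e1, e2]
    have h1' : (1 : ℝ) - ξ ≠ 0 := by linarith
    field_simp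
  · simpa using summable_geometric_of_lt_one h0 h1
  · have : Summable fun n : ℕ => ξ ^ n * ξ :=
      (summable_geometric_of_lt_one h0 h1).mul_right ξ
    apply this.congr
    intro n
    have : ((-(↑n + 1) : ℤ)).natAbs = n + 1 := by omega
    rw [this, pow_succ]

lemma coord {ν : ℝ} (hν : 1 < ν) (M : ℕ) (n l : ℤ) :
    ((ν ^ (n + 2 * (M : ℤ) * l).natAbs)⁻¹ : ℝ)
      ≤ ν ^ n.natAbs * (ν ^ (-(2 * (M : ℤ)))) ^ l.natAbs := by
  have hν0 : (0 : ℝ) < ν := by linarith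
  have hL : ((ν ^ (n + 2 * (M : ℤ) * l).natAbs)⁻¹ : ℝ)
      = ν ^ (-(((n + 2 * (M : ℤ) * l).natAbs : ℤ))) := by
    rw [zpow_neg, zpow_natCast]
  have hR : ν ^ n.natAbs * (ν ^ (-(2 * (M : ℤ)))) ^ l.natAbs
      = ν ^ ((n.natAbs : ℤ) + (-(2 * (M : ℤ))) * (l.natAbs : ℤ)) := by
    rw [zpow_add₀ hν0.ne', zpow_natCast, ← zpow_natCast (ν ^ (-(2 * (M : ℤ)))), ← zpow_mul]
  rw [hL, hR]
  apply zpow_le_zpow_right₀ hν.le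
  have key : (((2 * (M : ℤ) * l).natAbs : ℤ)) = 2 * (M : ℤ) * (l.natAbs : ℤ) := by
    rw [Int.natAbs_mul, Int.natAbs_mul]
    push_cast [Int.natAbs_natCast]
    ring
  have hre : (n.natAbs : ℤ) + (-(2 * (M : ℤ))) * (l.natAbs : ℤ)
      = (n.natAbs : ℤ) - (((2 * (M : ℤ) * l).natAbs : ℤ)) := by rw [key]; ring
  rw [hre]
  generalize 2 * (M : ℤ) * l = a
  omega


lemma fft_key (b : ℤ × ℤ → ℂ) (M1 M2 : ℕ) (hM1 : 0 < M1) (hM2 : 0 < M2)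
    (hsum : Summable fun j : ℤ × ℤ => ‖b j‖) (n : ℤ × ℤ) :
    (1 / (4 * (M1 : ℂ) * (M2 : ℂ))) *
        ∑ k1 ∈ Finset.Icc (-(M1 : ℤ)) ((M1 : ℤ) - 1),
          ∑ k2 ∈ Finset.Icc (-(M2 : ℤ)) ((M2 : ℤ) - 1),
            (∑' j : ℤ × ℤ, b j * Complex.exp (Complex.I * ((j.1 : ℂ) *
                ((Real.pi * (k1 : ℝ) / (M1 : ℝ) : ℝ) : ℂ) +
                (j.2 : ℂ) * ((Real.pi * (k2 : ℝ) / (M2 : ℝ) : ℝ) : ℂ)))) *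
              Complex.exp (-Complex.I *
                ((n.1 : ℂ) * ((Real.pi * (k1 : ℝ) / (M1 : ℝ) : ℝ) : ℂ) +
                 (n.2 : ℂ) * ((Real.pi * (k2 : ℝ) / (M2 : ℝ) : ℝ) : ℂ)))
      = ∑' l : ℤ × ℤ, b (n.1 + 2 * (M1 : ℤ) * l.1, n.2 + 2 * (M2 : ℤ) * l.2) := by
  classical
  have hM10 : (M1 : ℂ) ≠ 0 := by exact_mod_cast hM1.ne'
  have hM20 : (M2 : ℂ) ≠ 0 := by exact_mod_cast hM2.ne'
  set x1 : ℤ → ℂ := fun k => ((Real.pi * (k : ℝ) / (M1 : ℝ) : ℝ) : ℂ) with hx1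
  set x2 : ℤ → ℂ := fun k => ((Real.pi * (k : ℝ) / (M2 : ℝ) : ℝ) : ℂ) with hx2
  set E1 : ℤ → ℤ → ℂ := fun m k => Complex.exp (Complex.I * (m : ℂ) * x1 k) with hE1
  set E2 : ℤ → ℤ → ℂ := fun m k => Complex.exp (Complex.I * (m : ℂ) * x2 k) with hE2
  set F : ℤ × ℤ → ℤ × ℤ → ℂ :=
    fun k j => b j * (E1 (j.1 - n.1) k.1 * E2 (j.2 - n.2) k.2) with hF
  have hnormE1 : ∀ m k, ‖E1 m k‖ = 1 := by
    intro m k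
    rw [hE1]
    simp only [Complex.norm_exp]
    norm_num [Complex.mul_re]
    right
    simp [hx1]
  have hnormE2 : ∀ m k, ‖E2 m k‖ = 1 := by
    intro m k
    rw [hE2]
    simp only [Complex.norm_exp]
    norm_num [Complex.mul_re]
    right
    simp [hx2]
  have hFsum : ∀ k : ℤ × ℤ, Summable (F k) := by
    intro k
    apply Summable.of_norm_bounded hsum
    intro j
    rw [hF]
    simp only []
    rw [norm_mul, norm_mul, hnormE1, hnormE2, mul_one, mul_one]
  -- step a: rewrite each (k1,k2) term
  have hstep1 :
      ∑ k1 ∈ Finset.Icc (-(M1 : ℤ)) ((M1 : ℤ) - 1),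
        ∑ k2 ∈ Finset.Icc (-(M2 : ℤ)) ((M2 : ℤ) - 1),
          (∑' j : ℤ × ℤ, b j * Complex.exp (Complex.I * ((j.1 : ℂ) * x1 k1 +
              (j.2 : ℂ) * x2 k2))) *
            Complex.exp (-Complex.I * ((n.1 : ℂ) * x1 k1 + (n.2 : ℂ) * x2 k2))
      = ∑ k ∈ (Finset.Icc (-(M1 : ℤ)) ((M1 : ℤ) - 1)) ×ˢ
          (Finset.Icc (-(M2 : ℤ)) ((M2 : ℤ) - 1)), ∑' j : ℤ × ℤ, F k j := by
    rw [Finset.sum_product]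
    refine Finset.sum_congr rfl fun k1 _ => Finset.sum_congr rfl fun k2 _ => ?_
    rw [← tsum_mul_right]
    refine tsum_congr fun j => ?_
    simp only [hF, hE1, hE2]
    rw [mul_assoc]
    congr 1
    rw [← Complex.exp_add, ← Complex.exp_add]
    congr 1
    push_cast
    ring
  -- step b: swap sums
  have hstep2 :
      ∑ k ∈ (Finset.Icc (-(M1 : ℤ)) ((M1 : ℤ) - 1)) ×ˢ
          (Finset.Icc (-(M2 : ℤ)) ((M2 : ℤ) - 1)), ∑' j : ℤ × ℤ, F k j
      = ∑' j : ℤ × ℤ, ∑ k ∈ (Finset.Icc (-(M1 : ℤ)) ((M1 : ℤ) - 1)) ×ˢ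
          (Finset.Icc (-(M2 : ℤ)) ((M2 : ℤ) - 1)), F k j :=
    Summable.tsum_finsetSum (fun k _ => hFsum k) |>.symm
  -- step c: factor and orthogonality
  have hstep3 : ∀ j : ℤ × ℤ,
      ∑ k ∈ (Finset.Icc (-(M1 : ℤ)) ((M1 : ℤ) - 1)) ×ˢ
          (Finset.Icc (-(M2 : ℤ)) ((M2 : ℤ) - 1)), F k j
      = b j * ((if (2 * (M1 : ℤ)) ∣ (j.1 - n.1) then ((2 * M1 : ℕ) : ℂ) else 0) *
               (if (2 * (M2 : ℤ)) ∣ (j.2 - n.2) then ((2 * M2 : ℕ) : ℂ) else 0)) := by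
    intro j
    rw [Finset.sum_product]
    rw [← orth1 M1 hM1 (j.1 - n.1), ← orth1 M2 hM2 (j.2 - n.2)]
    rw [Finset.sum_mul_sum]
    simp only [Finset.mul_sum]
    rfl
  set φ : ℤ × ℤ → ℤ × ℤ :=
    fun l => (n.1 + 2 * (M1 : ℤ) * l.1, n.2 + 2 * (M2 : ℤ) * l.2) with hφdef
  set f : ℤ × ℤ → ℂ := fun j =>
    if (2 * (M1 : ℤ)) ∣ (j.1 - n.1) ∧ (2 * (M2 : ℤ)) ∣ (j.2 - n.2) then b j else 0 with hf
  have hstep4 : ∀ j : ℤ × ℤ, (1 / (4 * (M1 : ℂ) * (M2 : ℂ))) *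
      (b j * ((if (2 * (M1 : ℤ)) ∣ (j.1 - n.1) then ((2 * M1 : ℕ) : ℂ) else 0) *
              (if (2 * (M2 : ℤ)) ∣ (j.2 - n.2) then ((2 * M2 : ℕ) : ℂ) else 0)))
      = f j := by
    intro j
    simp only [hf]
    by_cases h1 : (2 * (M1 : ℤ)) ∣ (j.1 - n.1)
    · by_cases h2 : (2 * (M2 : ℤ)) ∣ (j.2 - n.2)
      · rw [if_pos h1, if_pos h2, if_pos (⟨h1, h2⟩ : _ ∧ _)]
        push_cast
        field_simp
        ring
      · rw [if_neg h2, if_neg (fun hc : _ ∧ _ => h2 hc.2)]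
        simp
    · rw [if_neg h1, if_neg (fun hc : _ ∧ _ => h1 hc.1)]
      simp
  have hφinj : Function.Injective φ := by
    intro a c h
    rw [hφdef, Prod.ext_iff] at h
    obtain ⟨h1, h2⟩ := h
    simp only at h1 h2
    have hM1' : (2 * (M1 : ℤ)) ≠ 0 := by omega
    have hM2' : (2 * (M2 : ℤ)) ≠ 0 := by omega
    have e1 : a.1 = c.1 := by
      apply mul_left_cancel₀ hM1'
      linarith
    have e2 : a.2 = c.2 := by
      apply mul_left_cancel₀ hM2'
      linarith
    exact Prod.ext e1 e2
  have hsupp : Function.support f ⊆ Set.range φ := by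
    intro j hj
    rw [Function.mem_support, hf] at hj
    by_cases h : (2 * (M1 : ℤ)) ∣ (j.1 - n.1) ∧ (2 * (M2 : ℤ)) ∣ (j.2 - n.2)
    · obtain ⟨⟨t1, ht1⟩, ⟨t2, ht2⟩⟩ := h
      refine ⟨(t1, t2), ?_⟩
      rw [hφdef, Prod.ext_iff]
      constructor <;> simp <;> omega
    · simp only [h, if_false] at hj
      exact absurd rfl hj
  have hstep6 : ∀ l : ℤ × ℤ, f (φ l) = b (φ l) := by
    intro l
    simp only [hf, hφdef]
    rw [if_pos]
    exact ⟨⟨l.1, by ring⟩, ⟨l.2, by ring⟩⟩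
  calc (1 / (4 * (M1 : ℂ) * (M2 : ℂ))) *
        ∑ k1 ∈ Finset.Icc (-(M1 : ℤ)) ((M1 : ℤ) - 1),
          ∑ k2 ∈ Finset.Icc (-(M2 : ℤ)) ((M2 : ℤ) - 1),
            (∑' j : ℤ × ℤ, b j * Complex.exp (Complex.I * ((j.1 : ℂ) * x1 k1 +
                (j.2 : ℂ) * x2 k2))) *
              Complex.exp (-Complex.I * ((n.1 : ℂ) * x1 k1 + (n.2 : ℂ) * x2 k2))
      = (1 / (4 * (M1 : ℂ) * (M2 : ℂ))) * ∑' j : ℤ × ℤ,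
          b j * ((if (2 * (M1 : ℤ)) ∣ (j.1 - n.1) then ((2 * M1 : ℕ) : ℂ) else 0) *
                 (if (2 * (M2 : ℤ)) ∣ (j.2 - n.2) then ((2 * M2 : ℕ) : ℂ) else 0)) := by
        rw [hstep1, hstep2, tsum_congr hstep3]
    _ = ∑' j : ℤ × ℤ, f j := by
        rw [← tsum_mul_left]
        exact tsum_congr hstep4
    _ = ∑' l : ℤ × ℤ, f (φ l) := (hφinj.tsum_eq hsupp).symm
    _ = ∑' l : ℤ × ℤ, b (n.1 + 2 * (M1 : ℤ) * l.1, n.2 + 2 * (M2 : ℤ) * l.2) :=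
        tsum_congr hstep6

set_option maxHeartbeats 1000000 in
theorem stmt13 (g : ℝ × ℝ → ℂ) (b : ℤ × ℤ → ℂ) (M1 M2 : ℕ) (hM1 : 0 < M1) (hM2 : 0 < M2)
    (hcont : Continuous g)
    (hper1 : ∀ x : ℝ × ℝ, g (x.1 + 2 * Real.pi, x.2) = g x)
    (hper2 : ∀ x : ℝ × ℝ, g (x.1, x.2 + 2 * Real.pi) = g x)
    (hsum : Summable fun j : ℤ × ℤ => ‖b j‖)
    (hrep : ∀ x : ℝ × ℝ, g x = ∑' j : ℤ × ℤ,
      b j * Complex.exp (Complex.I * ((j.1 : ℂ) * (x.1 : ℂ) + (j.2 : ℂ) * (x.2 : ℂ))))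
    (C νb1 νb2 : ℝ) (hC : 0 ≤ C) (hνb1 : 1 < νb1) (hνb2 : 1 < νb2)
    (hdecay : ∀ j : ℤ × ℤ, ‖b j‖ ≤ C / (νb1 ^ j.1.natAbs * νb2 ^ j.2.natAbs)) :
    ∀ n : ℤ × ℤ, -(M1 : ℤ) ≤ n.1 → n.1 ≤ (M1 : ℤ) - 1 → -(M2 : ℤ) ≤ n.2 → n.2 ≤ (M2 : ℤ) - 1 →
      ‖b n - (1 / (4 * (M1 : ℂ) * (M2 : ℂ))) *
          ∑ k1 ∈ Finset.Icc (-(M1 : ℤ)) ((M1 : ℤ) - 1),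
            ∑ k2 ∈ Finset.Icc (-(M2 : ℤ)) ((M2 : ℤ) - 1),
              g (Real.pi * (k1 : ℝ) / (M1 : ℝ), Real.pi * (k2 : ℝ) / (M2 : ℝ)) *
                Complex.exp (-Complex.I *
                  ((n.1 : ℂ) * ((Real.pi * (k1 : ℝ) / (M1 : ℝ) : ℝ) : ℂ) +
                   (n.2 : ℂ) * ((Real.pi * (k2 : ℝ) / (M2 : ℝ) : ℝ) : ℂ)))‖
        ≤ C * (νb1 ^ n.1.natAbs * νb2 ^ n.2.natAbs) *
            (2 * (νb1 ^ (-(2 * (M1 : ℤ))) + νb2 ^ (-(2 * (M2 : ℤ)))) /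
              ((1 - νb1 ^ (-(2 * (M1 : ℤ)))) * (1 - νb2 ^ (-(2 * (M2 : ℤ)))))) := by
  classical
  intro n hn1 hn2 hn3 hn4
  -- replace g by its Fourier series and apply the discrete Poisson summation
  have hgrw : ∀ k1 ∈ Finset.Icc (-(M1 : ℤ)) ((M1 : ℤ) - 1),
      ∀ k2 ∈ Finset.Icc (-(M2 : ℤ)) ((M2 : ℤ) - 1),
      g (Real.pi * (k1 : ℝ) / (M1 : ℝ), Real.pi * (k2 : ℝ) / (M2 : ℝ)) *
        Complex.exp (-Complex.I *
          ((n.1 : ℂ) * ((Real.pi * (k1 : ℝ) / (M1 : ℝ) : ℝ) : ℂ) +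
           (n.2 : ℂ) * ((Real.pi * (k2 : ℝ) / (M2 : ℝ) : ℝ) : ℂ)))
      = (∑' j : ℤ × ℤ, b j * Complex.exp (Complex.I * ((j.1 : ℂ) *
            ((Real.pi * (k1 : ℝ) / (M1 : ℝ) : ℝ) : ℂ) +
            (j.2 : ℂ) * ((Real.pi * (k2 : ℝ) / (M2 : ℝ) : ℝ) : ℂ)))) *
          Complex.exp (-Complex.I *
            ((n.1 : ℂ) * ((Real.pi * (k1 : ℝ) / (M1 : ℝ) : ℝ) : ℂ) +
             (n.2 : ℂ) * ((Real.pi * (k2 : ℝ) / (M2 : ℝ) : ℝ) : ℂ))) := by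
    intro k1 _ k2 _
    rw [hrep]
  rw [Finset.sum_congr rfl (fun k1 hk1 => Finset.sum_congr rfl (hgrw k1 hk1)),
    fft_key b M1 M2 hM1 hM2 hsum n]
  -- now bound the aliasing sum
  set φ : ℤ × ℤ → ℤ × ℤ :=
    fun l => (n.1 + 2 * (M1 : ℤ) * l.1, n.2 + 2 * (M2 : ℤ) * l.2) with hφdef
  have hφinj : Function.Injective φ := by
    intro a c h
    rw [hφdef, Prod.ext_iff] at h
    obtain ⟨h1, h2⟩ := h
    simp only at h1 h2
    have hM1' : (2 * (M1 : ℤ)) ≠ 0 := by omega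
    have hM2' : (2 * (M2 : ℤ)) ≠ 0 := by omega
    have e1 : a.1 = c.1 := by
      apply mul_left_cancel₀ hM1'
      linarith
    have e2 : a.2 = c.2 := by
      apply mul_left_cancel₀ hM2'
      linarith
    exact Prod.ext e1 e2
  have hb : Summable b := hsum.of_norm
  have hbφ : Summable (fun l : ℤ × ℤ => b (φ l)) := hb.comp_injective hφinj
  have hsplit : ∑' l : ℤ × ℤ, b (φ l)
      = b n + ∑' l : ℤ × ℤ, if l = ((0, 0) : ℤ × ℤ) then 0 else b (φ l) := by
    have h := Summable.tsum_eq_add_tsum_ite hbφ ((0, 0) : ℤ × ℤ)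
    have hφ0 : φ ((0, 0) : ℤ × ℤ) = n := by
      rw [hφdef]
      simp
    rw [hφ0] at h
    exact h
  have hdiff : b n - ∑' l : ℤ × ℤ, b (φ l)
      = -∑' l : ℤ × ℤ, (if l = ((0, 0) : ℤ × ℤ) then 0 else b (φ l)) := by
    rw [hsplit]; ring
  -- geometric quantities
  set ξ1 : ℝ := νb1 ^ (-(2 * (M1 : ℤ))) with hξ1
  set ξ2 : ℝ := νb2 ^ (-(2 * (M2 : ℤ))) with hξ2
  have hν1pos : (0 : ℝ) < νb1 := lt_trans one_pos hνb1
  have hν2pos : (0 : ℝ) < νb2 := lt_trans one_pos hνb2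
  have hξ1pos : 0 < ξ1 := zpow_pos hν1pos _
  have hξ2pos : 0 < ξ2 := zpow_pos hν2pos _
  have hξ1lt : ξ1 < 1 := by
    rw [hξ1]
    apply zpow_lt_one_of_neg₀ hνb1
    omega
  have hξ2lt : ξ2 < 1 := by
    rw [hξ2]
    apply zpow_lt_one_of_neg₀ hνb2
    omega
  set K : ℝ := C * (νb1 ^ n.1.natAbs * νb2 ^ n.2.natAbs) with hK
  have hKpos : 0 ≤ K := by positivity
  set G : ℤ × ℤ → ℝ := fun l => K * (ξ1 ^ l.1.natAbs * ξ2 ^ l.2.natAbs) with hG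
  have hGnonneg : ∀ l, 0 ≤ G l := by
    intro l
    rw [hG]
    positivity
  have hpt : ∀ l : ℤ × ℤ, ‖b (φ l)‖ ≤ G l := by
    intro l
    refine le_trans (hdecay (φ l)) ?_
    have c1 := coord hνb1 M1 n.1 l.1
    have c2 := coord hνb2 M2 n.2 l.2
    rw [hφdef, hG, hK]
    simp only []
    rw [div_eq_mul_inv, mul_inv]
    calc C * ((νb1 ^ (n.1 + 2 * (M1 : ℤ) * l.1).natAbs)⁻¹ *
            (νb2 ^ (n.2 + 2 * (M2 : ℤ) * l.2).natAbs)⁻¹)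
        ≤ C * ((νb1 ^ n.1.natAbs * ξ1 ^ l.1.natAbs) *
            (νb2 ^ n.2.natAbs * ξ2 ^ l.2.natAbs)) := by
          apply mul_le_mul_of_nonneg_left _ hC
          apply mul_le_mul c1 c2 (by positivity) (by positivity)
      _ = C * (νb1 ^ n.1.natAbs * νb2 ^ n.2.natAbs) *
            (ξ1 ^ l.1.natAbs * ξ2 ^ l.2.natAbs) := by ring
  have hu1 : Summable (fun t : ℤ => ξ1 ^ t.natAbs) := geoZ_summable hξ1pos.le hξ1lt
  have hu2 : Summable (fun t : ℤ => ξ2 ^ t.natAbs) := geoZ_summable hξ2pos.le hξ2lt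
  have hprodsum : Summable (fun l : ℤ × ℤ => ξ1 ^ l.1.natAbs * ξ2 ^ l.2.natAbs) :=
    hu1.mul_of_nonneg hu2 (fun t => by positivity) (fun t => by positivity)
  have hGsum : Summable G := hprodsum.mul_left K
  have hGt : ∑' l : ℤ × ℤ, G l = K * ((1 + ξ1) / (1 - ξ1) * ((1 + ξ2) / (1 - ξ2))) := by
    rw [hG, tsum_mul_left]
    congr 1
    rw [Summable.tsum_prod' hprodsum (fun l1 => hu2.mul_left (ξ1 ^ l1.natAbs))]
    simp only []
    calc ∑' (l1 : ℤ) (l2 : ℤ), ξ1 ^ l1.natAbs * ξ2 ^ l2.natAbs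
        = ∑' l1 : ℤ, ξ1 ^ l1.natAbs * ∑' l2 : ℤ, ξ2 ^ l2.natAbs := by
          refine tsum_congr fun l1 => ?_
          rw [tsum_mul_left]
      _ = (∑' l1 : ℤ, ξ1 ^ l1.natAbs) * ∑' l2 : ℤ, ξ2 ^ l2.natAbs := tsum_mul_right
      _ = (1 + ξ1) / (1 - ξ1) * ((1 + ξ2) / (1 - ξ2)) := by
          rw [geoZ_tsum hξ1pos.le hξ1lt, geoZ_tsum hξ2pos.le hξ2lt]
  have hGite : Summable (fun l : ℤ × ℤ => if l = ((0, 0) : ℤ × ℤ) then 0 else G l) := by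
    apply Summable.of_nonneg_of_le _ _ hGsum
    · intro l
      by_cases h : l = ((0, 0) : ℤ × ℤ)
      · rw [if_pos h]
      · rw [if_neg h]
        exact hGnonneg l
    · intro l
      by_cases h : l = ((0, 0) : ℤ × ℤ)
      · rw [if_pos h]
        exact hGnonneg _
      · rw [if_neg h]
  have hnormite : ∀ l : ℤ × ℤ,
      ‖(if l = ((0, 0) : ℤ × ℤ) then 0 else b (φ l))‖
        ≤ (if l = ((0, 0) : ℤ × ℤ) then 0 else G l) := by
    intro l
    by_cases h : l = ((0, 0) : ℤ × ℤ)
    · simp [h]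
    · simp only [h, if_false]
      exact hpt l
  have hnsum : Summable (fun l : ℤ × ℤ =>
      ‖(if l = ((0, 0) : ℤ × ℤ) then 0 else b (φ l))‖) := by
    apply Summable.of_nonneg_of_le (fun l => norm_nonneg _) hnormite hGite
  have hitetsum : ∑' l : ℤ × ℤ, (if l = ((0, 0) : ℤ × ℤ) then 0 else G l)
      = (∑' l : ℤ × ℤ, G l) - G ((0, 0) : ℤ × ℤ) := by
    have h := Summable.tsum_eq_add_tsum_ite hGsum ((0, 0) : ℤ × ℤ)
    linarith
  have hG0 : G ((0, 0) : ℤ × ℤ) = K := by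
    rw [hG]
    simp
  have hd1 : (1 : ℝ) - ξ1 ≠ 0 := by linarith
  have hd2 : (1 : ℝ) - ξ2 ≠ 0 := by linarith
  calc ‖b n - ∑' l : ℤ × ℤ, b (φ l)‖
      = ‖∑' l : ℤ × ℤ, (if l = ((0, 0) : ℤ × ℤ) then 0 else b (φ l))‖ := by
        rw [hdiff, norm_neg]
    _ ≤ ∑' l : ℤ × ℤ, ‖(if l = ((0, 0) : ℤ × ℤ) then 0 else b (φ l))‖ :=
        norm_tsum_le_tsum_norm hnsum
    _ ≤ ∑' l : ℤ × ℤ, (if l = ((0, 0) : ℤ × ℤ) then 0 else G l) :=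
        Summable.tsum_le_tsum hnormite hnsum hGite
    _ = (∑' l : ℤ × ℤ, G l) - G ((0, 0) : ℤ × ℤ) := hitetsum
    _ = K * ((1 + ξ1) / (1 - ξ1) * ((1 + ξ2) / (1 - ξ2))) - K := by rw [hGt, hG0]
    _ = K * (2 * (ξ1 + ξ2) / ((1 - ξ1) * (1 - ξ2))) := by
        field_simp
        ring
    _ = C * (νb1 ^ n.1.natAbs * νb2 ^ n.2.natAbs) *
          (2 * (ξ1 + ξ2) / ((1 - ξ1) * (1 - ξ2))) := by rw [hK]
end

section
/- Let $\bar\nu>\nu\ge 1$ (componentwise, $\bar\nu,\nu\in\mathbb{R}^2$) and fix $j\in\mathbb{N}^2$. For $k\in\mathbb{N}^2$, define $\mu(j,k):=\frac{1}{4}\sum_{i=1}^4 \bar\nu_1^{-|j_1-\epsilon_{i,1}k_1|}\bar\nu_2^{-|j_2-\epsilon_{i,2}k_2|}\nu_1^{-k_1}\nu_2^{-k_2}$, where $(\epsilon_{i,1},\epsilon_{i,2})$ ranges over $\{(1,1),(-1,1),(1,-1),(-1,-1)\}$. Let $N\in\mathbb{N}^2$ with $j\in I_N^+$ and let $\mathcal{I}_N:=\{(k_1,N_2+1):0\le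 k_1\le N_1\}\cup\{(N_1+1,k_2):0\le k_2\le N_2\}$. Then $\mu(j,k)\le\max_{k'\in\mathcal{I}_N}\mu(j,k')$ for all $k\in\mathbb{N}^2\setminus I_N^+$. -/
/-- `μ(j,k) = (1/4) ∑ᵢ ν̄₁^{-|j₁-ε₁k₁|} ν̄₂^{-|j₂-ε₂k₂|} ν₁^{-k₁} ν₂^{-k₂}`, where
`(ε₁,ε₂)` ranges over the four sign combinations. -/
noncomputable def mu (νb1 νb2 ν1 ν2 : ℝ) (j k : ℕ × ℕ) : ℝ :=
  (1 / 4) *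
    (((νb1 ^ ((j.1 : ℤ) - (k.1 : ℤ)).natAbs * νb2 ^ ((j.2 : ℤ) - (k.2 : ℤ)).natAbs)⁻¹ +
      (νb1 ^ ((j.1 : ℤ) + (k.1 : ℤ)).natAbs * νb2 ^ ((j.2 : ℤ) - (k.2 : ℤ)).natAbs)⁻¹ +
      (νb1 ^ ((j.1 : ℤ) - (k.1 : ℤ)).natAbs * νb2 ^ ((j.2 : ℤ) + (k.2 : ℤ)).natAbs)⁻¹ +
      (νb1 ^ ((j.1 : ℤ) + (k.1 : ℤ)).natAbs * νb2 ^ ((j.2 : ℤ) + (k.2 : ℤ)).natAbs)⁻¹) *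
      (ν1 ^ k.1 * ν2 ^ k.2)⁻¹)

noncomputable def gf (νb ν : ℝ) (j k : ℕ) : ℝ :=
  ((νb ^ ((j : ℤ) - (k : ℤ)).natAbs)⁻¹ + (νb ^ ((j : ℤ) + (k : ℤ)).natAbs)⁻¹) * (ν ^ k)⁻¹

lemma mu_eq (νb1 νb2 ν1 ν2 : ℝ) (j k : ℕ × ℕ) :
    mu νb1 νb2 ν1 ν2 j k = (1/4) * gf νb1 ν1 j.1 k.1 * gf νb2 ν2 j.2 k.2 := by
  simp only [mu, gf, mul_inv]
  ring

lemma gf_nonneg (νb ν : ℝ) (hν : 1 ≤ ν) (h : ν < νb) (j k : ℕ) : 0 ≤ gf νb ν j k := by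
  have h1 : (0:ℝ) < ν := lt_of_lt_of_le one_pos hν
  have h2 : (0:ℝ) < νb := h1.trans h
  unfold gf
  positivity

lemma gf_mono (νb ν : ℝ) (hν : 1 ≤ ν) (h : ν < νb) (j m n : ℕ) (hjm : j ≤ m) (hmn : m ≤ n) :
    gf νb ν j n ≤ gf νb ν j m := by
  have hνb : (1:ℝ) ≤ νb := hν.trans h.le
  have hνp : (0:ℝ) < ν := lt_of_lt_of_le one_pos hν
  have hνbp : (0:ℝ) < νb := hνp.trans h
  have e1 : ((j : ℤ) - (n : ℤ)).natAbs = n - j := by omega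
  have e2 : ((j : ℤ) - (m : ℤ)).natAbs = m - j := by omega
  have e3 : ((j : ℤ) + (n : ℤ)).natAbs = j + n := by omega
  have e4 : ((j : ℤ) + (m : ℤ)).natAbs = j + m := by omega
  unfold gf
  rw [e1, e2, e3, e4, add_mul, add_mul]
  have key : ∀ a b : ℕ, a ≤ b → (νb ^ a * ν ^ m) ≤ (νb ^ b * ν ^ n) := by
    intro a b hab
    exact mul_le_mul (pow_le_pow_right₀ hνb hab) (pow_le_pow_right₀ hν hmn)
      (by positivity) (by positivity)
  have t1 : (νb ^ (n - j))⁻¹ * (ν ^ n)⁻¹ ≤ (νb ^ (m - j))⁻¹ * (ν ^ m)⁻¹ := by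
    rw [← mul_inv, ← mul_inv]
    exact inv_anti₀ (by positivity) (key _ _ (by omega))
  have t2 : (νb ^ (j + n))⁻¹ * (ν ^ n)⁻¹ ≤ (νb ^ (j + m))⁻¹ * (ν ^ m)⁻¹ := by
    rw [← mul_inv, ← mul_inv]
    exact inv_anti₀ (by positivity) (key _ _ (by omega))
  linarith

theorem stmt14 (νb1 νb2 ν1 ν2 : ℝ) (hν1 : 1 ≤ ν1) (hν2 : 1 ≤ ν2)
    (h1 : ν1 < νb1) (h2 : ν2 < νb2) (j N : ℕ × ℕ) (hj : j.1 ≤ N.1 ∧ j.2 ≤ N.2) :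
    ∀ k : ℕ × ℕ, ¬ (k.1 ≤ N.1 ∧ k.2 ≤ N.2) →
      mu νb1 νb2 ν1 ν2 j k ≤
        (((Finset.range (N.1 + 1)).image (fun k1 => (k1, N.2 + 1)) ∪
            (Finset.range (N.2 + 1)).image (fun k2 => (N.1 + 1, k2))).sup'
          (Finset.Nonempty.inl
            (Finset.Nonempty.image
              (Finset.nonempty_range_iff.mpr (Nat.succ_ne_zero _)) _))
          (mu νb1 νb2 ν1 ν2 j)) := by
  intro k hk
  -- choose boundary point k'
  obtain ⟨hj1, hj2⟩ := hj
  push_neg at hk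
  have hmem_left : ∀ k1, k1 ≤ N.1 → (k1, N.2 + 1) ∈
      (((Finset.range (N.1 + 1)).image (fun k1 => (k1, N.2 + 1)) ∪
        (Finset.range (N.2 + 1)).image (fun k2 => (N.1 + 1, k2)))) := by
    intro k1 hk1
    exact Finset.mem_union_left _ (Finset.mem_image.mpr ⟨k1, Finset.mem_range.mpr (by omega), rfl⟩)
  have hmem_right : ∀ k2, k2 ≤ N.2 → (N.1 + 1, k2) ∈
      (((Finset.range (N.1 + 1)).image (fun k1 => (k1, N.2 + 1)) ∪
        (Finset.range (N.2 + 1)).image (fun k2 => (N.1 + 1, k2)))) := by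
    intro k2 hk2
    exact Finset.mem_union_right _ (Finset.mem_image.mpr ⟨k2, Finset.mem_range.mpr (by omega), rfl⟩)
  have step : ∀ k' : ℕ × ℕ, (k'.1 = k.1 ∨ (j.1 ≤ k'.1 ∧ k'.1 ≤ k.1)) →
      (k'.2 = k.2 ∨ (j.2 ≤ k'.2 ∧ k'.2 ≤ k.2)) →
      mu νb1 νb2 ν1 ν2 j k ≤ mu νb1 νb2 ν1 ν2 j k' := by
    intro k' a c
    rw [mu_eq, mu_eq]
    have g1 : gf νb1 ν1 j.1 k.1 ≤ gf νb1 ν1 j.1 k'.1 := by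
      rcases a with a | ⟨a1, a2⟩
      · rw [a]
      · exact gf_mono νb1 ν1 hν1 h1 j.1 k'.1 k.1 a1 a2
    have g2 : gf νb2 ν2 j.2 k.2 ≤ gf νb2 ν2 j.2 k'.2 := by
      rcases c with c | ⟨c1, c2⟩
      · rw [c]
      · exact gf_mono νb2 ν2 hν2 h2 j.2 k'.2 k.2 c1 c2
    have n1 := gf_nonneg νb1 ν1 hν1 h1 j.1 k.1
    have n2 := gf_nonneg νb2 ν2 hν2 h2 j.2 k.2
    have n1' := gf_nonneg νb1 ν1 hν1 h1 j.1 k'.1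
    nlinarith
  by_cases hc1 : k.1 ≤ N.1
  · -- then k.2 > N.2
    have hc2 : N.2 + 1 ≤ k.2 := by omega
    calc mu νb1 νb2 ν1 ν2 j k ≤ mu νb1 νb2 ν1 ν2 j (k.1, N.2 + 1) :=
          step (k.1, N.2 + 1) (Or.inl rfl) (Or.inr ⟨by simp; omega, hc2⟩)
      _ ≤ _ := Finset.le_sup' _ (hmem_left k.1 hc1)
  · by_cases hc2 : k.2 ≤ N.2
    · calc mu νb1 νb2 ν1 ν2 j k ≤ mu νb1 νb2 ν1 ν2 j (N.1 + 1, k.2) :=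
            step (N.1 + 1, k.2) (Or.inr ⟨by simp; omega, by omega⟩) (Or.inl rfl)
        _ ≤ _ := Finset.le_sup' _ (hmem_right k.2 hc2)
    · calc mu νb1 νb2 ν1 ν2 j k ≤ mu νb1 νb2 ν1 ν2 j (N.1, N.2 + 1) :=
            step (N.1, N.2 + 1) (Or.inr ⟨hj1, by omega⟩) (Or.inr ⟨by simp; omega, by omega⟩)
        _ ≤ _ := Finset.le_sup' _ (hmem_left N.1 le_rfl)
end
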